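/- Let X be a group and A an infinite generating set for X. If the metric space (X, d_A) with the word metric induced by A has infinite diameter, then for every positive integer h the sphere S_A(h) = {x : ℓ_A(x) = h} is infinite. -/
import Mathlib


/-- The word length of `x` with respect to the generating set `A`. -/
noncomputable def wordLength {X : Type*} [Group X] (A : Set X) (x : X) : ℕ :=
  sInf {k | ∃ l : List X, l.length = k ∧ (∀ a ∈ l, a ∈ A ∪ A⁻¹) ∧ l.prod = x}

section aux

variable {X : Type*} [Group X] (A : Set X)

lemma wl_inv_mem {a : X} (ha : a ∈ A ∪ A⁻¹) : a⁻¹ ∈ A ∪ A⁻¹ := by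
  rcases ha with h | h
  · exact Or.inr (by simpa [Set.mem_inv] using h)
  · exact Or.inl (by simpa [Set.mem_inv] using h)

lemma wl_exists_list (hA : Subgroup.closure A = ⊤) (x : X) :
    ∃ l : List X, (∀ a ∈ l, a ∈ A ∪ A⁻¹) ∧ l.prod = x := by
  have hx : x ∈ Subgroup.closure A := by rw [hA]; trivial
  induction hx using Subgroup.closure_induction with
  | mem a ha => exact ⟨[a], by simpa using Or.inl ha, by simp⟩
  | one => exact ⟨[], by simp, by simp⟩
  | mul x y hx hy ihx ihy =>
    obtain ⟨l, hl, hlp⟩ := ihx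
    obtain ⟨m, hm, hmp⟩ := ihy
    exact ⟨l ++ m, List.forall_mem_append.2 ⟨hl, hm⟩, by simp [hlp, hmp]⟩
  | inv x hx ihx =>
    obtain ⟨l, hl, hlp⟩ := ihx
    refine ⟨(l.map fun a => a⁻¹).reverse, ?_, ?_⟩
    · intro a ha
      simp only [List.mem_reverse, List.mem_map] at ha
      obtain ⟨b, hb, rfl⟩ := ha
      exact wl_inv_mem A (hl b hb)
    · rw [← List.prod_inv_reverse, hlp]

lemma wl_spec (hA : Subgroup.closure A = ⊤) (x : X) :
    ∃ l : List X, l.length = wordLength A x ∧ (∀ a ∈ l, a ∈ A ∪ A⁻¹) ∧ l.prod = x := by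
  obtain ⟨l, hl, hlp⟩ := wl_exists_list A hA x
  have hne : {k | ∃ l : List X, l.length = k ∧ (∀ a ∈ l, a ∈ A ∪ A⁻¹) ∧ l.prod = x}.Nonempty :=
    ⟨l.length, l, rfl, hl, hlp⟩
  exact Nat.sInf_mem hne

lemma wl_le {x : X} (l : List X) (hl : ∀ a ∈ l, a ∈ A ∪ A⁻¹) (hlp : l.prod = x) :
    wordLength A x ≤ l.length :=
  Nat.sInf_le ⟨l, rfl, hl, hlp⟩

lemma wl_eq_zero (hA : Subgroup.closure A = ⊤) {x : X} (h : wordLength A x = 0) : x = 1 := by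
  obtain ⟨l, hlen, _, hlp⟩ := wl_spec A hA x
  rw [h, List.length_eq_zero_iff] at hlen
  rw [← hlp, hlen, List.prod_nil]

lemma wl_le_one {a : X} (ha : a ∈ A ∪ A⁻¹) : wordLength A a ≤ 1 := by
  simpa using wl_le A [a] (by simpa using ha) (by simp)

lemma wl_mul_le (hA : Subgroup.closure A = ⊤) (x y : X) :
    wordLength A (x * y) ≤ wordLength A x + wordLength A y := by
  obtain ⟨l, hllen, hl, hlp⟩ := wl_spec A hA x
  obtain ⟨m, hmlen, hm, hmp⟩ := wl_spec A hA y
  have := wl_le (x := x * y) A (l ++ m) (List.forall_mem_append.2 ⟨hl, hm⟩) (by simp [hlp, hmp])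
  simpa [hllen, hmlen] using this

lemma wl_inv_le (hA : Subgroup.closure A = ⊤) (x : X) :
    wordLength A x⁻¹ ≤ wordLength A x := by
  obtain ⟨l, hllen, hl, hlp⟩ := wl_spec A hA x
  have := wl_le A ((l.map fun a => a⁻¹).reverse)
    (by intro a ha
        simp only [List.mem_reverse, List.mem_map] at ha
        obtain ⟨b, hb, rfl⟩ := ha
        exact wl_inv_mem A (hl b hb))
    (by rw [← List.prod_inv_reverse, hlp])
  simpa [hllen] using this

lemma wl_inv (hA : Subgroup.closure A = ⊤) (x : X) :
    wordLength A x⁻¹ = wordLength A x :=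
  le_antisymm (wl_inv_le A hA x) (by simpa using wl_inv_le A hA x⁻¹)

end aux

/-- If `A` is an infinite generating set of `X` and the metric space `(X, d_A)` has
infinite diameter, then every sphere `S_A(h)` with `h ≥ 1` is infinite. -/
theorem sphere_infinite_of_infinite_diameter {X : Type*} [Group X] (A : Set X)
    (hA : Subgroup.closure A = ⊤) (hAinf : A.Infinite)
    (hdiam : ∀ n : ℕ, ∃ x : X, n < wordLength A x) :
    ∀ h : ℕ, 0 < h → {x : X | wordLength A x = h}.Infinite := by
  intro h hh
  rcases Nat.lt_or_ge h 2 with h1 | h2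
  · -- h = 1
    have hh1 : h = 1 := by omega
    subst hh1
    refine Set.Infinite.mono ?_ (hAinf.diff (Set.finite_singleton 1))
    rintro a ⟨haA, hane⟩
    have h1 : wordLength A a ≤ 1 := wl_le_one A (Or.inl haA)
    have h0 : wordLength A a ≠ 0 := fun hz => hane (by simpa using wl_eq_zero A hA hz)
    simp only [Set.mem_setOf_eq]
    omega
  · -- h ≥ 2
    by_contra hinf
    rw [Set.not_infinite] at hinf
    set B : Set X := {x | wordLength A x < h} with hB
    have hBsymm : ∀ b : X, b ∈ B → b⁻¹ ∈ B := by
      intro b hb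
      simpa [hB, wl_inv A hA] using hb
    -- the key finiteness property, proved by closure induction
    have key : ∀ x : X, ((fun b => x * b) '' B \ B).Finite ∧
        ((fun b => b * x) '' B \ B).Finite := by
      intro x
      have hx : x ∈ Subgroup.closure A := by rw [hA]; trivial
      induction hx using Subgroup.closure_induction with
      | mem a ha =>
        constructor
        · refine hinf.subset ?_
          rintro z ⟨⟨b, hb, rfl⟩, hzb⟩
          have h1 : wordLength A (a * b) ≤ wordLength A a + wordLength A b :=
            wl_mul_le A hA a b
          have h2 : wordLength A a ≤ 1 := wl_le_one A (Or.inl ha)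
          have h3 : wordLength A b < h := hb
          have h4 : ¬ wordLength A (a * b) < h := hzb
          simp only [Set.mem_setOf_eq]
          omega
        · refine hinf.subset ?_
          rintro z ⟨⟨b, hb, rfl⟩, hzb⟩
          have h1 : wordLength A (b * a) ≤ wordLength A b + wordLength A a :=
            wl_mul_le A hA b a
          have h2 : wordLength A a ≤ 1 := wl_le_one A (Or.inl ha)
          have h3 : wordLength A b < h := hb
          have h4 : ¬ wordLength A (b * a) < h := hzb
          simp only [Set.mem_setOf_eq]
          omega
      | one =>
        constructor <;>
        · refine Set.Finite.subset (Set.finite_empty) ?_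
          rintro z ⟨⟨b, hb, rfl⟩, hzb⟩
          simp only [one_mul, mul_one] at hzb
          exact absurd hb hzb
      | mul x y hx hy ihx ihy =>
        constructor
        · refine Set.Finite.subset ((ihy.1.image (fun z => x * z)).union ihx.1) ?_
          rintro z ⟨⟨b, hb, rfl⟩, hzb⟩
          by_cases hyb : y * b ∈ B
          · exact Or.inr ⟨⟨y * b, hyb, (mul_assoc x y b).symm⟩, hzb⟩
          · exact Or.inl ⟨y * b, ⟨⟨b, hb, rfl⟩, hyb⟩, (mul_assoc x y b).symm⟩
        · refine Set.Finite.subset ((ihx.2.image (fun z => z * y)).union ihy.2) ?_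
          rintro z ⟨⟨b, hb, rfl⟩, hzb⟩
          by_cases hbx : b * x ∈ B
          · exact Or.inr ⟨⟨b * x, hbx, mul_assoc b x y⟩, hzb⟩
          · exact Or.inl ⟨b * x, ⟨⟨b, hb, rfl⟩, hbx⟩, mul_assoc b x y⟩
      | inv x hx ihx =>
        constructor
        · refine Set.Finite.subset (ihx.2.image (fun z => z⁻¹)) ?_
          rintro z ⟨⟨b, hb, rfl⟩, hzb⟩
          refine ⟨b⁻¹ * x, ⟨⟨b⁻¹, hBsymm b hb, rfl⟩, ?_⟩, by simp [mul_inv_rev]⟩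
          intro hcon
          exact hzb (by simpa [mul_inv_rev] using hBsymm _ hcon)
        · refine Set.Finite.subset (ihx.1.image (fun z => z⁻¹)) ?_
          rintro z ⟨⟨b, hb, rfl⟩, hzb⟩
          refine ⟨x * b⁻¹, ⟨⟨b⁻¹, hBsymm b hb, rfl⟩, ?_⟩, by simp [mul_inv_rev]⟩
          intro hcon
          exact hzb (by simpa [mul_inv_rev] using hBsymm _ hcon)
    -- now take a long element and derive that B is finite
    obtain ⟨x, hx⟩ := hdiam (2 * h + 1)
    have hdisj : ∀ b : X, b ∈ B → x * b ∉ B := by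
      intro b hb hcon
      have h1 : wordLength A x ≤ wordLength A (x * b) + wordLength A b⁻¹ := by
        have := wl_mul_le A hA (x * b) b⁻¹
        simpa using this
      have h2 : wordLength A b⁻¹ = wordLength A b := wl_inv A hA b
      have h3 : wordLength A b < h := hb
      have h4 : wordLength A (x * b) < h := hcon
      omega
    have hBfin : B.Finite := by
      refine Set.Finite.subset ((key x).1.image (fun z => x⁻¹ * z)) ?_
      intro b hb
      exact ⟨x * b, ⟨⟨b, hb, rfl⟩, hdisj b hb⟩, by simp⟩
    have hBinf : B.Infinite := by
      refine Set.Infinite.mono ?_ (hAinf.diff (Set.finite_singleton 1))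
      rintro a ⟨haA, _⟩
      have : wordLength A a ≤ 1 := wl_le_one A (Or.inl haA)
      simp only [hB, Set.mem_setOf_eq]
      omega
    exact hBinf hBfin
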